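/- arXiv:0909.3473 — 7 statements merged into one kernel-verified Lean document; each statement's English description precedes it below -/
import Mathlib

section
/- Let J be a Hermitian complex structure on V and let θ : V×V → ℝ be a symmetric bilinear form with θ(Jx,Jy) = θ(x,y) for all x,y. Then the tensor φ(θ) + ψ(θ), where (φ(θ))(x,y,z,w) := ⟨x,w⟩θ(y,z) − ⟨x,z⟩θ(y,w) + θ(x,w)⟨y,z⟩ − θ(x,z)⟨y,w⟩ and (ψ(θ))(x,y,z,w) := ⟨Jx,w⟩θ(Jy,z) − ⟨Jx,z⟩θ(Jy,w) − 2⟨Jx,y⟩θ(Jz,w) + θ(Jx,w)⟨Jy,z⟩ − θ(Jx,z)⟨Jy,w⟩ − 2θ(Jx,y)⟨Jz,w⟩, is an algebraic curvature tensor on V and satisfies the Kaehler identity (φ(θ)+ψ(θ))(x,y,z,w) = (φ(θ)+ψ(θ))(Jx,Jy,z,w) for all x,y,z,w. -/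
open scoped RealInnerProductSpace

/-- For a symmetric `J`-invariant bilinear form `θ`, the tensor `φ(θ) + ψ(θ)` is an
algebraic curvature tensor and satisfies the Kaehler identity. -/
theorem phi_add_psi_is_kaehler_curvature_tensor
    {V : Type*} [NormedAddCommGroup V] [InnerProductSpace ℝ V] [FiniteDimensional ℝ V]
    {n : ℕ} (hdim : Module.finrank ℝ V = 2 * n) (hm : 4 ≤ Module.finrank ℝ V)
    (J : V →ₗ[ℝ] V)
    (hJ2 : ∀ x : V, J (J x) = -x)
    (hJi : ∀ x y : V, ⟪J x, J y⟫ = ⟪x, y⟫)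
    (θ : V →ₗ[ℝ] V →ₗ[ℝ] ℝ)
    (hθs : ∀ x y : V, θ x y = θ y x)
    (hθJ : ∀ x y : V, θ (J x) (J y) = θ x y)
    (P : V → V → V → V → ℝ)
    (hP : ∀ x y z w : V, P x y z w =
      (⟪x, w⟫ * θ y z - ⟪x, z⟫ * θ y w + θ x w * ⟪y, z⟫ - θ x z * ⟪y, w⟫)
      + (⟪J x, w⟫ * θ (J y) z - ⟪J x, z⟫ * θ (J y) w - 2 * ⟪J x, y⟫ * θ (J z) w
        + θ (J x) w * ⟪J y, z⟫ - θ (J x) z * ⟪J y, w⟫ - 2 * θ (J x) y * ⟪J z, w⟫)) :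
    (∀ x y z w : V, P x y z w = - P y x z w) ∧
    (∀ x y z w : V, P x y z w = P z w x y) ∧
    (∀ x y z w : V, P x y z w + P y z x w + P z x y w = 0) ∧
    (∀ x y z w : V, P x y z w = P (J x) (J y) z w) := by
  -- J is skew-adjoint for the inner product
  have hsI : ∀ a b : V, ⟪a, J b⟫ = -⟪J a, b⟫ := by
    intro a b
    calc ⟪a, J b⟫ = ⟪J a, J (J b)⟫ := (hJi _ _).symm
      _ = ⟪J a, -b⟫ := by rw [hJ2]
      _ = -⟪J a, b⟫ := by rw [inner_neg_right]
  -- J is skew-adjoint for θ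
  have hsT : ∀ a b : V, θ a (J b) = -θ (J a) b := by
    intro a b
    calc θ a (J b) = θ (J a) (J (J b)) := (hθJ _ _).symm
      _ = θ (J a) (-b) := by rw [hJ2]
      _ = -θ (J a) b := by rw [map_neg]
  have A : ∀ a b : V, ⟪J a, b⟫ = -⟪J b, a⟫ := by
    intro a b
    rw [real_inner_comm]
    exact hsI b a
  have B : ∀ a b : V, θ (J a) b = -θ (J b) a := by
    intro a b
    rw [hθs]
    exact hsT b a
  refine ⟨?_, ?_, ?_, ?_⟩
  · intro x y z w
    simp only [hP]
    rw [A y x, B y x]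
    ring
  · intro x y z w
    simp only [hP]
    rw [real_inner_comm z y, real_inner_comm z x, real_inner_comm w x, real_inner_comm w y,
      hθs w x, hθs w y, hθs z y, hθs z x,
      A z y, A z x, A w x, A w y, B w x, B w y, B z y, B z x]
    ring
  · intro x y z w
    simp only [hP]
    rw [hθs z x, real_inner_comm y x, hθs y x, real_inner_comm z x, real_inner_comm z y,
      hθs z y, B z x, A y x, A z x, B y x, A z y, B z y]
    ring
  · intro x y z w
    simp only [hP, hJ2, map_neg, LinearMap.neg_apply, inner_neg_left, inner_neg_right, neg_neg]
    rw [hsI x y, hsT x y]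
    ring
end

section
/- Let J be a Hermitian complex structure on V and let Θ ∈ S²₊(V*)⊗S²(V*) satisfy K_JΘ = 0, i.e. Θ(x,Jy,z,w) + Θ(y,Jz,x,w) + Θ(z,Jx,y,w) = 0 for all x,y,z,w. Then the algebraic curvature tensor LΘ, defined by (LΘ)(x,y,z,w) := Θ(x,z,y,w) + Θ(y,w,x,z) − Θ(x,w,y,z) − Θ(y,z,x,w), satisfies the Kaehler identity (LΘ)(x,y,z,w) = (LΘ)(Jx,Jy,z,w) for all x,y,z,w. -/
open scoped RealInnerProductSpace

/-- If `Θ ∈ S²₊(V*)⊗S²(V*)` lies in the kernel of `K_J`, then `LΘ` satisfies the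
Kaehler identity. -/
theorem L_of_ker_K_J_satisfies_kaehler_identity
    {V : Type*} [NormedAddCommGroup V] [InnerProductSpace ℝ V] [FiniteDimensional ℝ V]
    {n : ℕ} (hdim : Module.finrank ℝ V = 2 * n) (hm : 4 ≤ Module.finrank ℝ V)
    (J : V →ₗ[ℝ] V)
    (hJ2 : ∀ x : V, J (J x) = -x)
    (hJi : ∀ x y : V, ⟪J x, J y⟫ = ⟪x, y⟫)
    (Θ : V →ₗ[ℝ] V →ₗ[ℝ] V →ₗ[ℝ] V →ₗ[ℝ] ℝ)
    (hs1 : ∀ x y z w : V, Θ x y z w = Θ y x z w)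
    (hs2 : ∀ x y z w : V, Θ x y z w = Θ x y w z)
    (hsJ : ∀ x y z w : V, Θ (J x) (J y) z w = Θ x y z w)
    (hker : ∀ x y z w : V, Θ x (J y) z w + Θ y (J z) x w + Θ z (J x) y w = 0) :
    ∀ x y z w : V,
      Θ x z y w + Θ y w x z - Θ x w y z - Θ y z x w
      = Θ (J x) z (J y) w + Θ (J y) w (J x) z - Θ (J x) w (J y) z - Θ (J y) z (J x) w := by
  intro x y z w
  -- J can be moved across the first (symmetric) pair at the cost of a sign
  have m1 : ∀ a b c d : V, Θ (J a) b c d = - Θ a (J b) c d := by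
    intro a b c d
    have h := hsJ a (J b) c d
    rw [hJ2] at h
    simp only [map_neg, LinearMap.neg_apply] at h
    linarith
  -- four instances of the kernel condition, simplified
  have h1 := hker x z (J y) w
  rw [hJ2] at h1
  simp only [map_neg, LinearMap.neg_apply, hsJ] at h1
  -- h1 : Θ x (J z) (J y) w - Θ z y x w + Θ y x z w = 0 (up to sign form)
  have h2 := hker y w (J x) z
  rw [hJ2] at h2
  simp only [map_neg, LinearMap.neg_apply, hsJ] at h2
  have h3 := hker x w (J y) z
  rw [hJ2] at h3
  simp only [map_neg, LinearMap.neg_apply, hsJ] at h3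
  have h4 := hker y z (J x) w
  rw [hJ2] at h4
  simp only [map_neg, LinearMap.neg_apply, hsJ] at h4
  -- rewrite the RHS terms via m1
  have e1 : Θ (J x) z (J y) w = - Θ x (J z) (J y) w := m1 x z (J y) w
  have e2 : Θ (J y) w (J x) z = - Θ y (J w) (J x) z := m1 y w (J x) z
  have e3 : Θ (J x) w (J y) z = - Θ x (J w) (J y) z := m1 x w (J y) z
  have e4 : Θ (J y) z (J x) w = - Θ y (J z) (J x) w := m1 y z (J x) w
  have s1 := hs1 z y x w
  have s2 := hs1 y x z w
  have s3 := hs1 w x y z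
  have s4 := hs1 x y w z
  have s5 := hs2 x y w z
  have s6 := hs1 w y x z
  have s7 := hs1 y x w z
  have s8 := hs1 z x y w
  linarith [hs2 y x z w, hs2 x y z w, hs2 y w x z, hs2 x w y z]
end

section
/- Let J be a Hermitian complex structure on V. Then the linear map L restricted to ker(K_J) is surjective onto the space of Kaehler algebraic curvature tensors: for every algebraic curvature tensor A on V satisfying the Kaehler identity A(x,y,z,w) = A(Jx,Jy,z,w) for all x,y,z,w, there exists Θ ∈ S²₊(V*)⊗S²(V*) with K_JΘ = 0 and LΘ = A. -/
open scoped RealInnerProductSpace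

/-!
The tensor is `Θ(x, y, z, w) = ½ A(x, Jy, z, Jw)`. Since `J² = -1`, the Kaehler identity
`A(Jx, Jy, ·, ·) = A(x, y, ·, ·)` lets `J` move between the two vectors of a pair at the cost of
a sign; this turns the skew-symmetries of `A` into the symmetries of `Θ` and makes `Θ`
`J`-invariant. Substituting `Θ` into `K_J` gives `-½` times the first Bianchi sum of `A`, and
substituting it into `L` gives, after one application of the first Bianchi identity, `A` itself.
-/

section KaehlerCurvature

variable {R V : Type*} [CommRing R] [AddCommGroup V] [Module R V]
  {J : V →ₗ[R] V} {A : V →ₗ[R] V →ₗ[R] V →ₗ[R] V →ₗ[R] R}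

/- `simp` cannot use `map_neg` in the first slot: the codomain of `A` carries the
`AddCommMonoid` instance of linear maps, which is not reducibly the one of an `AddCommGroup`. -/
theorem apply_neg_first (x y z w : V) : A (-x) y z w = -A x y z w := by
  rw [eq_neg_iff_add_eq_zero, ← LinearMap.add_apply, ← LinearMap.add_apply, ← LinearMap.add_apply,
    ← map_add, neg_add_cancel, map_zero]
  rfl

theorem apply_swap_right (hA1 : ∀ x y z w, A x y z w = -A y x z w)
    (hA2 : ∀ x y z w, A x y z w = A z w x y) (x y z w : V) :
    A x y z w = -A x y w z := by
  rw [hA2, hA1, hA2 w]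

theorem apply_J_J_right (hA2 : ∀ x y z w, A x y z w = A z w x y)
    (hK : ∀ x y z w, A x y z w = A (J x) (J y) z w) (x y z w : V) :
    A x y (J z) (J w) = A x y z w := by
  rw [hA2, ← hK, hA2]

theorem apply_J_second (hJ2 : ∀ x, J (J x) = -x)
    (hK : ∀ x y z w, A x y z w = A (J x) (J y) z w) (x y z w : V) :
    A x (J y) z w = -A (J x) y z w := by
  rw [hK (J x), hJ2, apply_neg_first, neg_neg]

theorem apply_J_fourth (hJ2 : ∀ x, J (J x) = -x) (hA2 : ∀ x y z w, A x y z w = A z w x y)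
    (hK : ∀ x y z w, A x y z w = A (J x) (J y) z w) (x y z w : V) :
    A x y z (J w) = -A x y (J z) w := by
  simp [← apply_J_J_right hA2 hK x y z (J w), hJ2]

variable (J A) in
def twistByJ : V →ₗ[R] V →ₗ[R] V →ₗ[R] V →ₗ[R] R :=
  (A.compl₂ J).compr₂ (LinearMap.llcomp R V (V →ₗ[R] R) (V →ₗ[R] R) (LinearMap.lcomp R R J))

@[simp]
theorem twistByJ_apply (x y z w : V) : twistByJ J A x y z w = A x (J y) z (J w) := rfl

theorem twistByJ_symm_left (hJ2 : ∀ x, J (J x) = -x) (hA1 : ∀ x y z w, A x y z w = -A y x z w)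
    (hK : ∀ x y z w, A x y z w = A (J x) (J y) z w) (x y z w : V) :
    twistByJ J A x y z w = twistByJ J A y x z w := by
  simp only [twistByJ_apply]
  linear_combination apply_J_second hJ2 hK x y z (J w) - hA1 (J x) y z (J w)

theorem twistByJ_symm_right (hJ2 : ∀ x, J (J x) = -x) (hA1 : ∀ x y z w, A x y z w = -A y x z w)
    (hA2 : ∀ x y z w, A x y z w = A z w x y) (hK : ∀ x y z w, A x y z w = A (J x) (J y) z w)
    (x y z w : V) :
    twistByJ J A x y z w = twistByJ J A x y w z := by
  simp only [twistByJ_apply]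
  linear_combination apply_J_fourth hJ2 hA2 hK x (J y) z w
    - apply_swap_right hA1 hA2 x (J y) (J z) w

theorem twistByJ_J_J (hJ2 : ∀ x, J (J x) = -x) (hK : ∀ x y z w, A x y z w = A (J x) (J y) z w)
    (x y z w : V) :
    twistByJ J A (J x) (J y) z w = twistByJ J A x y z w := by
  simp only [twistByJ_apply, hJ2, map_neg, LinearMap.neg_apply]
  linear_combination -apply_J_second hJ2 hK x y z (J w)

theorem twistByJ_cyclic_sum_eq_zero (hJ2 : ∀ x, J (J x) = -x)
    (hA3 : ∀ x y z w, A x y z w + A y z x w + A z x y w = 0) (x y z w : V) :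
    twistByJ J A x (J y) z w + twistByJ J A y (J z) x w + twistByJ J A z (J x) y w = 0 := by
  simp only [twistByJ_apply, hJ2, map_neg, LinearMap.neg_apply]
  linear_combination -hA3 x y z (J w)

theorem twistByJ_L_eq_two_mul (hA1 : ∀ x y z w, A x y z w = -A y x z w)
    (hA2 : ∀ x y z w, A x y z w = A z w x y)
    (hA3 : ∀ x y z w, A x y z w + A y z x w + A z x y w = 0)
    (hK : ∀ x y z w, A x y z w = A (J x) (J y) z w) (x y z w : V) :
    twistByJ J A x z y w + twistByJ J A y w x z - twistByJ J A x w y z - twistByJ J A y z x w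
      = 2 * A x y z w := by
  simp only [twistByJ_apply]
  linear_combination hA2 y (J w) x (J z) + hA2 y (J z) x (J w) + 2 * hA3 x (J z) y (J w)
    - 2 * hA1 (J z) y x (J w) - 2 * apply_J_J_right hA2 hK y x z w - 2 * hA1 y x z w

end KaehlerCurvature

theorem L_surjective_onto_kaehler_tensors_general
    {V : Type*} [NormedAddCommGroup V] [InnerProductSpace ℝ V]
    (J : V →ₗ[ℝ] V)
    (hJ2 : ∀ x : V, J (J x) = -x)
    (A : V →ₗ[ℝ] V →ₗ[ℝ] V →ₗ[ℝ] V →ₗ[ℝ] ℝ)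
    (hA1 : ∀ x y z w : V, A x y z w = - A y x z w)
    (hA2 : ∀ x y z w : V, A x y z w = A z w x y)
    (hA3 : ∀ x y z w : V, A x y z w + A y z x w + A z x y w = 0)
    (hK : ∀ x y z w : V, A x y z w = A (J x) (J y) z w) :
    ∃ Θ : V →ₗ[ℝ] V →ₗ[ℝ] V →ₗ[ℝ] V →ₗ[ℝ] ℝ,
      (∀ x y z w : V, Θ x y z w = Θ y x z w) ∧
      (∀ x y z w : V, Θ x y z w = Θ x y w z) ∧
      (∀ x y z w : V, Θ (J x) (J y) z w = Θ x y z w) ∧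
      (∀ x y z w : V, Θ x (J y) z w + Θ y (J z) x w + Θ z (J x) y w = 0) ∧
      (∀ x y z w : V, Θ x z y w + Θ y w x z - Θ x w y z - Θ y z x w = A x y z w) := by
  refine ⟨(2⁻¹ : ℝ) • twistByJ J A, fun x y z w ↦ ?_, fun x y z w ↦ ?_, fun x y z w ↦ ?_,
    fun x y z w ↦ ?_, fun x y z w ↦ ?_⟩ <;>
    simp only [LinearMap.smul_apply, smul_eq_mul]
  · rw [twistByJ_symm_left hJ2 hA1 hK]
  · rw [twistByJ_symm_right hJ2 hA1 hA2 hK]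
  · rw [twistByJ_J_J hJ2 hK]
  · linear_combination 2⁻¹ * twistByJ_cyclic_sum_eq_zero hJ2 hA3 x y z w
  · linear_combination 2⁻¹ * twistByJ_L_eq_two_mul hA1 hA2 hA3 hK x y z w

/-- `L` restricted to `ker K_J` is surjective onto the space of Kaehler algebraic
curvature tensors: every algebraic curvature tensor satisfying the Kaehler identity
is of the form `LΘ` for some `Θ ∈ S²₊(V*)⊗S²(V*)` with `K_JΘ = 0`. -/
theorem L_surjective_onto_kaehler_tensors
    {V : Type*} [NormedAddCommGroup V] [InnerProductSpace ℝ V] [FiniteDimensional ℝ V]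
    {n : ℕ} (hdim : Module.finrank ℝ V = 2 * n) (hm : 4 ≤ Module.finrank ℝ V)
    (J : V →ₗ[ℝ] V)
    (hJ2 : ∀ x : V, J (J x) = -x)
    (hJi : ∀ x y : V, ⟪J x, J y⟫ = ⟪x, y⟫)
    (A : V →ₗ[ℝ] V →ₗ[ℝ] V →ₗ[ℝ] V →ₗ[ℝ] ℝ)
    (hA1 : ∀ x y z w : V, A x y z w = - A y x z w)
    (hA2 : ∀ x y z w : V, A x y z w = A z w x y)
    (hA3 : ∀ x y z w : V, A x y z w + A y z x w + A z x y w = 0)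
    (hK : ∀ x y z w : V, A x y z w = A (J x) (J y) z w) :
    ∃ Θ : V →ₗ[ℝ] V →ₗ[ℝ] V →ₗ[ℝ] V →ₗ[ℝ] ℝ,
      (∀ x y z w : V, Θ x y z w = Θ y x z w) ∧
      (∀ x y z w : V, Θ x y z w = Θ x y w z) ∧
      (∀ x y z w : V, Θ (J x) (J y) z w = Θ x y z w) ∧
      (∀ x y z w : V, Θ x (J y) z w + Θ y (J z) x w + Θ z (J x) y w = 0) ∧
      (∀ x y z w : V, Θ x z y w + Θ y w x z - Θ x w y z - Θ y z x w = A x y z w) :=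
  L_surjective_onto_kaehler_tensors_general J hJ2 A hA1 hA2 hA3 hK
end

section
/- Let J̃ be a para-Hermitian structure on V. Then for every algebraic curvature tensor A on V satisfying the para-Kaehler identity A(x,y,z,w) = −A(J̃x,J̃y,z,w) for all x,y,z,w, there exists Θ ∈ S²₋(V*)⊗S²(V*) with K_{J̃}Θ = 0 and LΘ = A. -/
/-!
Let `S(x,y,z,w) = A(x,z,y,w) + A(y,z,x,w)` be the symmetrisation of a curvature tensor `A`; it lies
in `S²(V*) ⊗ S²(V*)` and the first Bianchi identity gives `L S = 6 A`. If `A` is para-Kaehler, the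
twisted tensor `Q(x,y,z,w) = A(x,J̃y,z,J̃w)` is symmetric in each pair,
`S(J̃x,J̃y,z,w) = Q(x,z,y,w) + Q(y,z,x,w)`, and the Bianchi identity yields
`Q(z,y,x,w) - Q(z,x,y,w) = A(x,y,z,w)`; together they give `L (S ∘ (J̃ × J̃)) = 2 A`.
Hence `Θ = (S - S ∘ (J̃ × J̃)) / 4` is `J̃`-anti-invariant in its first pair and satisfies `L Θ = A`.
Finally `K_J̃ Θ` is a multiple of the cyclic sum of `A(x,z,J̃y,w) = -A(x,z,y,J̃w)` over `x, y, z`,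
which vanishes by the Bianchi identity.
-/

section CommRing

variable {R M : Type*} [CommRing R] [AddCommGroup M] [Module R M]

structure IsCurvatureTensor (A : M →ₗ[R] M →ₗ[R] M →ₗ[R] M →ₗ[R] R) : Prop where
  antisymm : ∀ x y z w, A x y z w = -A y x z w
  pair_symm : ∀ x y z w, A x y z w = A z w x y
  bianchi : ∀ x y z w, A x y z w + A y z x w + A z x y w = 0

structure IsParaKaehlerCurvatureTensor (J : M →ₗ[R] M)
    (A : M →ₗ[R] M →ₗ[R] M →ₗ[R] M →ₗ[R] R) : Prop extends IsCurvatureTensor A where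
  involutive : Function.Involutive J
  eq_neg_apply_J_J : ∀ x y z w, A x y z w = -A (J x) (J y) z w

/-- The operator `L`. -/
def toCurvature (Θ : M →ₗ[R] M →ₗ[R] M →ₗ[R] M →ₗ[R] R) (x y z w : M) : R :=
  Θ x z y w + Θ y w x z - Θ x w y z - Θ y z x w

def toSymSym (A : M →ₗ[R] M →ₗ[R] M →ₗ[R] M →ₗ[R] R) : M →ₗ[R] M →ₗ[R] M →ₗ[R] M →ₗ[R] R :=
  let T := (LinearMap.lflip (R₀ := R)).toLinearMap ∘ₗ A
  T + T.flip

@[simp]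
theorem toSymSym_apply (A : M →ₗ[R] M →ₗ[R] M →ₗ[R] M →ₗ[R] R) (x y z w : M) :
    toSymSym A x y z w = A x z y w + A y z x w := rfl

theorem toSymSym_comm_left (A : M →ₗ[R] M →ₗ[R] M →ₗ[R] M →ₗ[R] R) (x y z w : M) :
    toSymSym A x y z w = toSymSym A y x z w :=
  add_comm _ _

namespace IsCurvatureTensor

variable {A : M →ₗ[R] M →ₗ[R] M →ₗ[R] M →ₗ[R] R}

theorem antisymm_right (hA : IsCurvatureTensor A) (x y z w : M) : A x y z w = -A x y w z := by
  rw [hA.pair_symm, hA.antisymm, hA.pair_symm]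

theorem apply_reverse (hA : IsCurvatureTensor A) (x y z w : M) : A x y z w = A w z y x := by
  rw [hA.pair_symm, hA.antisymm, hA.antisymm_right, neg_neg]

theorem bianchi_right (hA : IsCurvatureTensor A) (x y z w : M) :
    A x y z w + A x z w y + A x w y z = 0 := by
  rw [hA.apply_reverse x y z w, hA.apply_reverse x z w y, hA.apply_reverse x w y z]
  linear_combination hA.bianchi w z y x

theorem toSymSym_comm_right (hA : IsCurvatureTensor A) (x y z w : M) :
    toSymSym A x y z w = toSymSym A x y w z := by
  simp only [toSymSym_apply]
  linear_combination hA.pair_symm x z y w + hA.pair_symm y z x w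

theorem toCurvature_toSymSym (hA : IsCurvatureTensor A) (x y z w : M) :
    toCurvature (toSymSym A) x y z w = 6 * A x y z w := by
  simp only [toCurvature, toSymSym_apply]
  linear_combination hA.antisymm y x w z - 2 * hA.antisymm_right x y z w
    + hA.apply_reverse w x y z - hA.apply_reverse w y x z
    - 3 * hA.antisymm y x z w - 2 * hA.antisymm z x y w + 2 * hA.bianchi x z y w

end IsCurvatureTensor

namespace IsParaKaehlerCurvatureTensor

variable {J : M →ₗ[R] M} {A : M →ₗ[R] M →ₗ[R] M →ₗ[R] M →ₗ[R] R}

theorem apply_J_left (hA : IsParaKaehlerCurvatureTensor J A) (x y z w : M) :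
    A (J x) y z w = -A x (J y) z w := by
  rw [hA.eq_neg_apply_J_J x (J y), hA.involutive, neg_neg]

theorem apply_J_right (hA : IsParaKaehlerCurvatureTensor J A) (x y z w : M) :
    A x y (J z) w = -A x y z (J w) := by
  linear_combination hA.pair_symm x y (J z) w + hA.apply_J_left z w x y
    + hA.pair_symm x y z (J w)

theorem apply_J_J_right (hA : IsParaKaehlerCurvatureTensor J A) (x y z w : M) :
    A x y (J z) (J w) = -A x y z w := by
  linear_combination hA.pair_symm x y (J z) (J w) + hA.eq_neg_apply_J_J z w x y
    + hA.pair_symm x y z w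

theorem apply_J_J_comm_left (hA : IsParaKaehlerCurvatureTensor J A) (x y z w : M) :
    A x (J y) z (J w) = A y (J x) z (J w) := by
  linear_combination hA.antisymm x (J y) z (J w) - hA.apply_J_left y x z (J w)

theorem apply_J_J_comm_right (hA : IsParaKaehlerCurvatureTensor J A) (x y z w : M) :
    A x (J y) z (J w) = A x (J y) w (J z) := by
  linear_combination hA.antisymm_right x (J y) z (J w) - hA.apply_J_right x (J y) w z

theorem apply_J_J_sub_apply_J_J (hA : IsParaKaehlerCurvatureTensor J A) (x y z w : M) :
    A z (J y) x (J w) - A z (J x) y (J w) = A x y z w := by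
  have h₁ := hA.bianchi_right z (J y) x (J w)
  have h₂ := hA.bianchi_right z (J x) y (J w)
  rw [hA.apply_J_J_right, hA.apply_J_right] at h₁ h₂
  linear_combination h₁ - h₂ + hA.apply_J_J_comm_right z w y x
    + hA.bianchi_right z x w y + hA.pair_symm z w x y
    - hA.antisymm_right z y w x - hA.antisymm_right z w y x

theorem cyclic_apply_J_third (hA : IsParaKaehlerCurvatureTensor J A) (x y z w : M) :
    A x z (J y) w + A y x (J z) w + A z y (J x) w = 0 := by
  rw [hA.apply_J_right, hA.apply_J_right, hA.apply_J_right]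
  linear_combination -hA.bianchi x z y (J w)

theorem toSymSym_apply_J_J (hA : IsParaKaehlerCurvatureTensor J A) (x y z w : M) :
    toSymSym A (J x) (J y) z w = A x (J z) y (J w) + A y (J z) x (J w) := by
  simp only [toSymSym_apply]
  linear_combination hA.apply_J_left x z (J y) w + hA.apply_J_left y z (J x) w
    - hA.apply_J_right x (J z) y w - hA.apply_J_right y (J z) x w

theorem toCurvature_toSymSym_compl₁₂ (hA : IsParaKaehlerCurvatureTensor J A) (x y z w : M) :
    toCurvature ((toSymSym A).compl₁₂ J J) x y z w = 2 * A x y z w := by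
  simp only [toCurvature, LinearMap.compl₁₂_apply, hA.toSymSym_apply_J_J]
  have comm_left := hA.apply_J_J_comm_left
  have comm_right := hA.apply_J_J_comm_right
  have pair (a b c d : M) := hA.pair_symm a (J b) c (J d)
  linear_combination comm_left y x w z - comm_left y x z w + pair w x y z + comm_left y z w x
    + comm_right z y w x - pair w y x z - comm_left x z w y - comm_right z x w y
    + 2 * hA.apply_J_J_sub_apply_J_J x y z w

theorem cyclic_toSymSym_sub_toSymSym_J_J (hA : IsParaKaehlerCurvatureTensor J A) (x y z w : M) :
    toSymSym A x (J y) z w - toSymSym A (J x) y z w + (toSymSym A y (J z) x w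
      - toSymSym A (J y) z x w) + (toSymSym A z (J x) y w - toSymSym A (J z) x y w) = 0 := by
  simp only [toSymSym_apply]
  linear_combination 3 * hA.cyclic_apply_J_third x y z w
    + hA.bianchi (J y) z x w + hA.bianchi (J z) x y w + hA.bianchi (J x) y z w
    - hA.antisymm (J y) x z w - hA.antisymm (J z) y x w - hA.antisymm (J x) z y w
    - 2 * (hA.antisymm z x (J y) w + hA.antisymm x y (J z) w + hA.antisymm y z (J x) w)

end IsParaKaehlerCurvatureTensor

end CommRing

section Field

variable {𝕜 V : Type*} [Field 𝕜] [AddCommGroup V] [Module 𝕜 V]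

-- Instance search does not find `Sub` on fourfold linear maps, hence `(-1 : 𝕜) •`.
def paraKaehlerToSymSym (J : V →ₗ[𝕜] V) (A : V →ₗ[𝕜] V →ₗ[𝕜] V →ₗ[𝕜] V →ₗ[𝕜] 𝕜) :
    V →ₗ[𝕜] V →ₗ[𝕜] V →ₗ[𝕜] V →ₗ[𝕜] 𝕜 :=
  (4 : 𝕜)⁻¹ • (toSymSym A + (-1 : 𝕜) • (toSymSym A).compl₁₂ J J)

variable {J : V →ₗ[𝕜] V} {A : V →ₗ[𝕜] V →ₗ[𝕜] V →ₗ[𝕜] V →ₗ[𝕜] 𝕜}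

theorem paraKaehlerToSymSym_apply (x y z w : V) :
    paraKaehlerToSymSym J A x y z w = 4⁻¹ * (toSymSym A x y z w - toSymSym A (J x) (J y) z w) := by
  simp only [paraKaehlerToSymSym, LinearMap.smul_apply, LinearMap.add_apply,
    LinearMap.compl₁₂_apply, smul_eq_mul]
  ring

theorem paraKaehlerToSymSym_comm_left (x y z w : V) :
    paraKaehlerToSymSym J A x y z w = paraKaehlerToSymSym J A y x z w := by
  rw [paraKaehlerToSymSym_apply, paraKaehlerToSymSym_apply, toSymSym_comm_left A x,
    toSymSym_comm_left A (J x)]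

theorem paraKaehlerToSymSym_apply_J_J (hJ : Function.Involutive J) (x y z w : V) :
    paraKaehlerToSymSym J A (J x) (J y) z w = -paraKaehlerToSymSym J A x y z w := by
  rw [paraKaehlerToSymSym_apply, paraKaehlerToSymSym_apply, hJ x, hJ y]
  ring

theorem IsCurvatureTensor.paraKaehlerToSymSym_comm_right (hA : IsCurvatureTensor A)
    (x y z w : V) : paraKaehlerToSymSym J A x y z w = paraKaehlerToSymSym J A x y w z := by
  rw [paraKaehlerToSymSym_apply, paraKaehlerToSymSym_apply, hA.toSymSym_comm_right x y z,
    hA.toSymSym_comm_right (J x) (J y) z]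

namespace IsParaKaehlerCurvatureTensor

theorem cyclic_paraKaehlerToSymSym_apply_J (hA : IsParaKaehlerCurvatureTensor J A)
    (x y z w : V) :
    paraKaehlerToSymSym J A x (J y) z w + paraKaehlerToSymSym J A y (J z) x w
      + paraKaehlerToSymSym J A z (J x) y w = 0 := by
  simp only [paraKaehlerToSymSym_apply, hA.involutive _]
  linear_combination 4⁻¹ * hA.cyclic_toSymSym_sub_toSymSym_J_J x y z w

theorem toCurvature_paraKaehlerToSymSym [CharZero 𝕜] (hA : IsParaKaehlerCurvatureTensor J A)
    (x y z w : V) : toCurvature (paraKaehlerToSymSym J A) x y z w = A x y z w := by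
  have h₆ := hA.toCurvature_toSymSym x y z w
  have h₂ := hA.toCurvature_toSymSym_compl₁₂ x y z w
  simp only [toCurvature, LinearMap.compl₁₂_apply, paraKaehlerToSymSym_apply] at h₆ h₂ ⊢
  linear_combination 4⁻¹ * h₆ - 4⁻¹ * h₂

end IsParaKaehlerCurvatureTensor

end Field

theorem L_surjective_onto_paraKaehler_tensors_general
    {V : Type*} [AddCommGroup V] [Module ℝ V]
    (Jt : V →ₗ[ℝ] V)
    (hJ2 : ∀ x : V, Jt (Jt x) = x)
    (A : V →ₗ[ℝ] V →ₗ[ℝ] V →ₗ[ℝ] V →ₗ[ℝ] ℝ)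
    (hA1 : ∀ x y z w : V, A x y z w = - A y x z w)
    (hA2 : ∀ x y z w : V, A x y z w = A z w x y)
    (hA3 : ∀ x y z w : V, A x y z w + A y z x w + A z x y w = 0)
    (hK : ∀ x y z w : V, A x y z w = - A (Jt x) (Jt y) z w) :
    ∃ Θ : V →ₗ[ℝ] V →ₗ[ℝ] V →ₗ[ℝ] V →ₗ[ℝ] ℝ,
      (∀ x y z w : V, Θ x y z w = Θ y x z w) ∧
      (∀ x y z w : V, Θ x y z w = Θ x y w z) ∧
      (∀ x y z w : V, Θ (Jt x) (Jt y) z w = - Θ x y z w) ∧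
      (∀ x y z w : V, Θ x (Jt y) z w + Θ y (Jt z) x w + Θ z (Jt x) y w = 0) ∧
      (∀ x y z w : V, Θ x z y w + Θ y w x z - Θ x w y z - Θ y z x w = A x y z w) := by
  have hA : IsParaKaehlerCurvatureTensor Jt A := ⟨⟨hA1, hA2, hA3⟩, hJ2, hK⟩
  exact ⟨paraKaehlerToSymSym Jt A, paraKaehlerToSymSym_comm_left,
    hA.toIsCurvatureTensor.paraKaehlerToSymSym_comm_right, paraKaehlerToSymSym_apply_J_J hJ2,
    hA.cyclic_paraKaehlerToSymSym_apply_J, hA.toCurvature_paraKaehlerToSymSym⟩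

/-- Para-Kaehler analogue of surjectivity: every algebraic curvature tensor satisfying
the para-Kaehler identity is of the form `LΘ` for some `Θ ∈ S²₋(V*)⊗S²(V*)` with
`K_{J̃}Θ = 0`. -/
theorem L_surjective_onto_paraKaehler_tensors
    {V : Type*} [AddCommGroup V] [Module ℝ V] [FiniteDimensional ℝ V]
    {n : ℕ} (hn : 2 ≤ n) (hdim : Module.finrank ℝ V = 2 * n)
    (B : V →ₗ[ℝ] V →ₗ[ℝ] ℝ)
    (hBsymm : ∀ x y : V, B x y = B y x)
    -- neutral signature (n, n)
    (b : Module.Basis (Fin (2 * n)) ℝ V)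
    (hb : ∀ i j : Fin (2 * n),
      B (b i) (b j) = if i = j then (if (i : ℕ) < n then 1 else -1) else 0)
    (Jt : V →ₗ[ℝ] V)
    (hJ2 : ∀ x : V, Jt (Jt x) = x)
    (hJi : ∀ x y : V, B (Jt x) (Jt y) = - B x y)
    (A : V →ₗ[ℝ] V →ₗ[ℝ] V →ₗ[ℝ] V →ₗ[ℝ] ℝ)
    (hA1 : ∀ x y z w : V, A x y z w = - A y x z w)
    (hA2 : ∀ x y z w : V, A x y z w = A z w x y)
    (hA3 : ∀ x y z w : V, A x y z w + A y z x w + A z x y w = 0)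
    (hK : ∀ x y z w : V, A x y z w = - A (Jt x) (Jt y) z w) :
    ∃ Θ : V →ₗ[ℝ] V →ₗ[ℝ] V →ₗ[ℝ] V →ₗ[ℝ] ℝ,
      (∀ x y z w : V, Θ x y z w = Θ y x z w) ∧
      (∀ x y z w : V, Θ x y z w = Θ x y w z) ∧
      (∀ x y z w : V, Θ (Jt x) (Jt y) z w = - Θ x y z w) ∧
      (∀ x y z w : V, Θ x (Jt y) z w + Θ y (Jt z) x w + Θ z (Jt x) y w = 0) ∧
      (∀ x y z w : V, Θ x z y w + Θ y w x z - Θ x w y z - Θ y z x w = A x y z w) :=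
  L_surjective_onto_paraKaehler_tensors_general Jt hJ2 A hA1 hA2 hA3 hK
end

section
/- Let J̃ be a para-Hermitian structure on V and let Θ ∈ S²₋(V*)⊗S²(V*) satisfy K_{J̃}Θ = 0. Then the algebraic curvature tensor LΘ satisfies the para-Kaehler identity (LΘ)(x,y,z,w) = −(LΘ)(J̃x,J̃y,z,w) for all x,y,z,w. -/
/-!
Write `A(x,y;z,w) = Θ(x,z,y,w) − Θ(y,z,x,w)`, so that `LΘ(x,y,z,w) = A(x,y;z,w) − A(x,y;w,z)`.
Evaluating the kernel condition `K_{J̃}Θ = 0` at `(x, J̃y, z; w)` and at `(J̃x, y, z; w)` and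
simplifying with `J̃² = id`, the symmetry of `Θ` in its first pair and
`Θ(J̃·,J̃·,·,·) = −Θ`, the two relations add up to `A(J̃x,J̃y;z,w) = −A(x,y;z,w)`.
The para-Kaehler identity for `LΘ` follows by antisymmetrizing in `z, w`.
-/

namespace ParaHermitian

variable {R M : Type*} [CommRing R] [AddCommGroup M] [Module R M]

def curvatureL (Θ : M →ₗ[R] M →ₗ[R] M →ₗ[R] M →ₗ[R] R) (x y z w : M) : R :=
  Θ x z y w + Θ y w x z - Θ x w y z - Θ y z x w

def skewFirstThird (Θ : M →ₗ[R] M →ₗ[R] M →ₗ[R] M →ₗ[R] R) (x y z w : M) : R :=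
  Θ x z y w - Θ y z x w

theorem curvatureL_eq_sub_skewFirstThird (Θ : M →ₗ[R] M →ₗ[R] M →ₗ[R] M →ₗ[R] R)
    (x y z w : M) :
    curvatureL Θ x y z w = skewFirstThird Θ x y z w - skewFirstThird Θ x y w z := by
  unfold curvatureL skewFirstThird
  ring

section KernelCondition

variable {J : M →ₗ[R] M} {Θ : M →ₗ[R] M →ₗ[R] M →ₗ[R] M →ₗ[R] R}
  (hJ2 : ∀ x, J (J x) = x)
  (hs1 : ∀ x y z w, Θ x y z w = Θ y x z w)
  (hsJ : ∀ x y z w, Θ (J x) (J y) z w = -Θ x y z w)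
  (hker : ∀ x y z w, Θ x (J y) z w + Θ y (J z) x w + Θ z (J x) y w = 0)
include hJ2 hs1 hsJ hker

theorem skewFirstThird_para_anti (x y z w : M) :
    skewFirstThird Θ (J x) (J y) z w = -skewFirstThird Θ x y z w := by
  have kerAtJy : Θ x y z w - Θ y z x w + Θ (J x) z (J y) w = 0 := by
    have h := hker x (J y) z w
    rw [hJ2, hsJ, hs1 z] at h
    linear_combination h
  have kerAtJx : Θ x z y w - Θ x y z w - Θ (J y) z (J x) w = 0 := by
    have h := hker (J x) y z w
    have hJz : Θ (J y) z (J x) w = -Θ y (J z) (J x) w := by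
      simpa only [hJ2] using hsJ y (J z) (J x) w
    rw [hJ2, hsJ, hs1 z] at h
    linear_combination h - hJz
  unfold skewFirstThird
  linear_combination kerAtJy + kerAtJx

theorem curvatureL_para_anti (x y z w : M) :
    curvatureL Θ x y z w = -curvatureL Θ (J x) (J y) z w := by
  simp only [curvatureL_eq_sub_skewFirstThird,
    skewFirstThird_para_anti hJ2 hs1 hsJ hker]
  ring

end KernelCondition

end ParaHermitian

theorem L_of_ker_K_paraHermitian_satisfies_paraKaehler_identity_general
    {V : Type*} [AddCommGroup V] [Module ℝ V]
    (Jt : V →ₗ[ℝ] V)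
    (hJ2 : ∀ x : V, Jt (Jt x) = x)
    (Θ : V →ₗ[ℝ] V →ₗ[ℝ] V →ₗ[ℝ] V →ₗ[ℝ] ℝ)
    (hs1 : ∀ x y z w : V, Θ x y z w = Θ y x z w)
    (hsJ : ∀ x y z w : V, Θ (Jt x) (Jt y) z w = - Θ x y z w)
    (hker : ∀ x y z w : V, Θ x (Jt y) z w + Θ y (Jt z) x w + Θ z (Jt x) y w = 0) :
    ∀ x y z w : V,
      Θ x z y w + Θ y w x z - Θ x w y z - Θ y z x w
      = -(Θ (Jt x) z (Jt y) w + Θ (Jt y) w (Jt x) z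
          - Θ (Jt x) w (Jt y) z - Θ (Jt y) z (Jt x) w) :=
  ParaHermitian.curvatureL_para_anti hJ2 hs1 hsJ hker

/-- If `Θ ∈ S²₋(V*)⊗S²(V*)` lies in the kernel of `K_{J̃}`, then `LΘ` satisfies the
para-Kaehler identity. -/
theorem L_of_ker_K_paraHermitian_satisfies_paraKaehler_identity
    {V : Type*} [AddCommGroup V] [Module ℝ V] [FiniteDimensional ℝ V]
    {n : ℕ} (hn : 2 ≤ n) (hdim : Module.finrank ℝ V = 2 * n)
    (B : V →ₗ[ℝ] V →ₗ[ℝ] ℝ)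
    (hBsymm : ∀ x y : V, B x y = B y x)
    -- neutral signature (n, n)
    (b : Module.Basis (Fin (2 * n)) ℝ V)
    (hb : ∀ i j : Fin (2 * n),
      B (b i) (b j) = if i = j then (if (i : ℕ) < n then 1 else -1) else 0)
    (Jt : V →ₗ[ℝ] V)
    (hJ2 : ∀ x : V, Jt (Jt x) = x)
    (hJi : ∀ x y : V, B (Jt x) (Jt y) = - B x y)
    (Θ : V →ₗ[ℝ] V →ₗ[ℝ] V →ₗ[ℝ] V →ₗ[ℝ] ℝ)
    (hs1 : ∀ x y z w : V, Θ x y z w = Θ y x z w)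
    (hs2 : ∀ x y z w : V, Θ x y z w = Θ x y w z)
    (hsJ : ∀ x y z w : V, Θ (Jt x) (Jt y) z w = - Θ x y z w)
    (hker : ∀ x y z w : V, Θ x (Jt y) z w + Θ y (Jt z) x w + Θ z (Jt x) y w = 0) :
    ∀ x y z w : V,
      Θ x z y w + Θ y w x z - Θ x w y z - Θ y z x w
      = -(Θ (Jt x) z (Jt y) w + Θ (Jt y) w (Jt x) z
          - Θ (Jt x) w (Jt y) z - Θ (Jt y) z (Jt x) w) :=
  L_of_ker_K_paraHermitian_satisfies_paraKaehler_identity_general Jt hJ2 Θ hs1 hsJ hker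
end

section
/- On V = ℝ^m with the standard inner product, standard basis {e₁,...,e_m}, and standard complex structure J (Je_{2k+1} = e_{2k+2}, Je_{2k+2} = −e_{2k+1} for 0 ≤ k < m̄), define Θ(x,y,z,w) := ½(x₁y₁ + x₂y₂)(z₁w₁ + z₂w₂), where x_i denotes the i-th coordinate of x. Then: (i) Θ ∈ S²₊(V*)⊗S²(V*); (ii) K_JΘ = 0; (iii) LΘ ≠ 0, and explicitly (LΘ)(x,y,z,w) = (x₁y₂ − x₂y₁)(z₁w₂ − z₂w₁) for all x,y,z,w; in particular (LΘ)(x,y,z,w) = 0 whenever any of x,y,z,w lies in the span of {e₃,...,e_m}. -/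
namespace GeometricRealizationsStmt12

/-- The standard complex structure on `ℝ^{2n}` (0-indexed): `J e_{2k} = e_{2k+1}`,
`J e_{2k+1} = -e_{2k}`. -/
def stdJ (n : ℕ) (x : Fin (2 * n) → ℝ) : Fin (2 * n) → ℝ := fun i =>
  if h : (i : ℕ) % 2 = 1 then x ⟨(i : ℕ) - 1, by have := i.isLt; omega⟩
  else - x ⟨(i : ℕ) + 1, by have := i.isLt; omega⟩

lemma stdJ_zero (n : ℕ) (x : Fin (2 * n) → ℝ) (h0 : 0 < 2 * n) (h1 : 1 < 2 * n) :
    stdJ n x ⟨0, h0⟩ = - x ⟨1, h1⟩ := by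
  simp [stdJ]

lemma stdJ_one (n : ℕ) (x : Fin (2 * n) → ℝ) (h0 : 0 < 2 * n) (h1 : 1 < 2 * n) :
    stdJ n x ⟨1, h1⟩ = x ⟨0, h0⟩ := by
  simp [stdJ]

lemma span_coord (n : ℕ) (x : Fin (2 * n) → ℝ)
    (hx : x ∈ Submodule.span ℝ {v : Fin (2 * n) → ℝ |
          ∃ i : Fin (2 * n), 2 ≤ (i : ℕ) ∧ v = Pi.single i 1})
    (j : Fin (2 * n)) (hj : (j : ℕ) < 2) : x j = 0 := by
  induction hx using Submodule.span_induction with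
  | mem v hv =>
      obtain ⟨i, hi, rfl⟩ := hv
      have : i ≠ j := by intro h; subst h; omega
      simp [Pi.single_eq_of_ne' this]
  | zero => simp
  | add a b _ _ ha hb => simp [ha, hb]
  | smul c a _ ha => simp [ha]

/-- On `V = ℝ^m` (`m = 2n ≥ 4`) with the standard complex structure `J`, the tensor
`Θ(x,y,z,w) = ½(x₁y₁ + x₂y₂)(z₁w₁ + z₂w₂)` lies in `S²₊(V*)⊗S²(V*)`, lies in the
kernel of `K_J`, and `LΘ ≠ 0`; explicitly `(LΘ)(x,y,z,w) = (x₁y₂ − x₂y₁)(z₁w₂ − z₂w₁)`,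
which vanishes whenever some argument lies in the span of `{e₃, …, e_m}`. -/
theorem theta_realizes_nonzero_kaehler_tensor
    (n : ℕ) (hn : 2 ≤ n)
    (J : (Fin (2 * n) → ℝ) → (Fin (2 * n) → ℝ)) (hJ : J = stdJ n)
    (Θ : (Fin (2 * n) → ℝ) → (Fin (2 * n) → ℝ) → (Fin (2 * n) → ℝ) → (Fin (2 * n) → ℝ) → ℝ)
    (hΘ : ∀ x y z w, Θ x y z w =
      (1 / 2) * (x ⟨0, by omega⟩ * y ⟨0, by omega⟩ + x ⟨1, by omega⟩ * y ⟨1, by omega⟩)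
        * (z ⟨0, by omega⟩ * w ⟨0, by omega⟩ + z ⟨1, by omega⟩ * w ⟨1, by omega⟩))
    (LΘ : (Fin (2 * n) → ℝ) → (Fin (2 * n) → ℝ) → (Fin (2 * n) → ℝ) → (Fin (2 * n) → ℝ) → ℝ)
    (hLΘ : ∀ x y z w, LΘ x y z w = Θ x z y w + Θ y w x z - Θ x w y z - Θ y z x w) :
    -- (i) `Θ ∈ S²₊(V*)⊗S²(V*)`
    ((∀ x y z w, Θ x y z w = Θ y x z w) ∧
     (∀ x y z w, Θ x y z w = Θ x y w z) ∧
     (∀ x y z w, Θ (J x) (J y) z w = Θ x y z w)) ∧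
    -- (ii) `K_JΘ = 0`
    (∀ x y z w, Θ x (J y) z w + Θ y (J z) x w + Θ z (J x) y w = 0) ∧
    -- (iii) `LΘ ≠ 0`, with the explicit formula
    (LΘ ≠ fun _ _ _ _ => (0 : ℝ)) ∧
    (∀ x y z w, LΘ x y z w =
      (x ⟨0, by omega⟩ * y ⟨1, by omega⟩ - x ⟨1, by omega⟩ * y ⟨0, by omega⟩)
        * (z ⟨0, by omega⟩ * w ⟨1, by omega⟩ - z ⟨1, by omega⟩ * w ⟨0, by omega⟩)) ∧
    (∀ x y z w : Fin (2 * n) → ℝ,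
      (x ∈ Submodule.span ℝ {v : Fin (2 * n) → ℝ |
          ∃ i : Fin (2 * n), 2 ≤ (i : ℕ) ∧ v = Pi.single i 1} ∨
       y ∈ Submodule.span ℝ {v : Fin (2 * n) → ℝ |
          ∃ i : Fin (2 * n), 2 ≤ (i : ℕ) ∧ v = Pi.single i 1} ∨
       z ∈ Submodule.span ℝ {v : Fin (2 * n) → ℝ |
          ∃ i : Fin (2 * n), 2 ≤ (i : ℕ) ∧ v = Pi.single i 1} ∨
       w ∈ Submodule.span ℝ {v : Fin (2 * n) → ℝ |
          ∃ i : Fin (2 * n), 2 ≤ (i : ℕ) ∧ v = Pi.single i 1}) →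
      LΘ x y z w = 0) := by
  subst hJ
  have h0 : 0 < 2 * n := by omega
  have h1 : 1 < 2 * n := by omega
  have hL' : ∀ x y z w, LΘ x y z w =
      (x ⟨0, h0⟩ * y ⟨1, h1⟩ - x ⟨1, h1⟩ * y ⟨0, h0⟩)
        * (z ⟨0, h0⟩ * w ⟨1, h1⟩ - z ⟨1, h1⟩ * w ⟨0, h0⟩) := by
    intro x y z w
    rw [hLΘ, hΘ, hΘ, hΘ, hΘ]; ring
  refine ⟨⟨?_, ?_, ?_⟩, ?_, ?_, hL', ?_⟩
  · intro x y z w; rw [hΘ, hΘ]; ring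
  · intro x y z w; rw [hΘ, hΘ]; ring
  · intro x y z w
    rw [hΘ, hΘ, stdJ_zero n x h0 h1, stdJ_one n x h0 h1,
      stdJ_zero n y h0 h1, stdJ_one n y h0 h1]
    ring
  · intro x y z w
    rw [hΘ, hΘ, hΘ, stdJ_zero n x h0 h1, stdJ_one n x h0 h1,
      stdJ_zero n y h0 h1, stdJ_one n y h0 h1,
      stdJ_zero n z h0 h1, stdJ_one n z h0 h1]
    ring
  · intro h
    have h10 : LΘ (Pi.single ⟨0, h0⟩ 1) (Pi.single ⟨1, h1⟩ 1)
        (Pi.single ⟨0, h0⟩ 1) (Pi.single ⟨1, h1⟩ 1) = 0 := by rw [h]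
    rw [hL'] at h10
    have hne : (⟨0, h0⟩ : Fin (2 * n)) ≠ ⟨1, h1⟩ := by
      intro hc; exact absurd (Fin.mk.injEq .. ▸ hc) (by simp)
    rw [Pi.single_eq_same, Pi.single_eq_same, Pi.single_eq_of_ne' hne,
      Pi.single_eq_of_ne hne] at h10
    norm_num at h10
  · intro x y z w hmem
    rw [hL']
    rcases hmem with hx | hy | hz | hw
    · rw [span_coord n x hx ⟨0, h0⟩ (by norm_num),
        span_coord n x hx ⟨1, h1⟩ (by norm_num)]; ring
    · rw [span_coord n y hy ⟨0, h0⟩ (by norm_num),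
        span_coord n y hy ⟨1, h1⟩ (by norm_num)]; ring
    · rw [span_coord n z hz ⟨0, h0⟩ (by norm_num),
        span_coord n z hz ⟨1, h1⟩ (by norm_num)]; ring
    · rw [span_coord n w hw ⟨0, h0⟩ (by norm_num),
        span_coord n w hw ⟨1, h1⟩ (by norm_num)]; ring

end GeometricRealizationsStmt12
end

section
/- Let J be a Hermitian complex structure on the finite-dimensional inner product space V and let Θ ∈ S²₊(V*)⊗S²(V*). Define the metric g_Θ(u)(x,y) := ⟨x,y⟩ + Θ(x,y,u,u) for u,x,y ∈ V, and the Kaehler 2-form Ω(u)(x,y) := g_Θ(u)(x,Jy). Then the exterior derivative of Ω, given in the constant frame by dΩ(u)(x,y,z) = D_xΩ(·)(y,z)|_u − D_yΩ(·)(x,z)|_u + D_zΩ(·)(x,y)|_u (where D_v denotes the directional derivative at u in direction v), satisfies dΩ(u)(x,y,z) = 2(K_JΘ)(x,y,z;u) for all u,x,y,z. In particular, dΩ vanishes identically if and only if K_JΘ = 0. -/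
/-!
Since `Ω(v)(a,b) = ⟨a,Jb⟩ + Θ(a,Jb,v,v)` is a constant plus a quadratic form in `v` that is
symmetric in its last two slots, `D_xΩ(·)(a,b)|_u = 2 Θ(a,Jb,x,u)`. The `J`-invariance and
symmetry of `Θ` in its first two slots make `(a,b) ↦ Θ(a,Jb,·,·)` antisymmetric, so the middle
term `-2 Θ(x,Jz,y,u)` of the frame formula equals `2 Θ(z,Jx,y,u)`, and the three terms form
`2 (K_JΘ)(x,y,z;u)`.
-/

open scoped RealInnerProductSpace

theorem LinearMap.fderiv_apply_self {𝕜 E F : Type*} [NontriviallyNormedField 𝕜] [CompleteSpace 𝕜]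
    [NormedAddCommGroup E] [NormedSpace 𝕜 E] [FiniteDimensional 𝕜 E]
    [NormedAddCommGroup F] [NormedSpace 𝕜 F] (B : E →ₗ[𝕜] E →ₗ[𝕜] F) (u x : E) :
    fderiv 𝕜 (fun v => B v v) u x = B u x + B x u := by
  have h : HasFDerivAt (fun v => B v v) _ u :=
    B.toContinuousBilinearMap.hasFDerivAt_of_bilinear (hasFDerivAt_id u) (hasFDerivAt_id u)
  rw [h.fderiv]
  simp

theorem LinearMap.apply_map_eq_neg_apply_map {R V M : Type*} [CommRing R] [AddCommGroup V]
    [Module R V] [AddCommGroup M] [Module R M] {J : V →ₗ[R] V} (hJ2 : ∀ x, J (J x) = -x)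
    (B : V →ₗ[R] V →ₗ[R] M) (hsymm : ∀ x y, B x y = B y x)
    (hJ : ∀ x y, B (J x) (J y) = B x y) (x y : V) :
    B x (J y) = -B y (J x) := by
  rw [← hJ, hJ2, map_neg, hsymm]

section KaehlerForm

variable {V : Type*} [NormedAddCommGroup V] [InnerProductSpace ℝ V] [FiniteDimensional ℝ V]
  {J : V →ₗ[ℝ] V} {Θ : V →ₗ[ℝ] V →ₗ[ℝ] V →ₗ[ℝ] V →ₗ[ℝ] ℝ} {Ω : V → V → V → ℝ}

theorem fderiv_kaehlerForm (hs2 : ∀ x y z w : V, Θ x y z w = Θ x y w z)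
    (hΩ : ∀ u x y : V, Ω u x y = ⟪x, J y⟫ + Θ x (J y) u u) (u a b x : V) :
    fderiv ℝ (fun v => Ω v a b) u x = 2 * Θ a (J b) x u := by
  simp only [hΩ, fderiv_const_add, LinearMap.fderiv_apply_self, hs2 a (J b) u x]
  ring

theorem kaehlerForm_extDeriv_eq (hJ2 : ∀ x : V, J (J x) = -x)
    (hs1 : ∀ x y z w : V, Θ x y z w = Θ y x z w)
    (hs2 : ∀ x y z w : V, Θ x y z w = Θ x y w z)
    (hsJ : ∀ x y z w : V, Θ (J x) (J y) z w = Θ x y z w)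
    (hΩ : ∀ u x y : V, Ω u x y = ⟪x, J y⟫ + Θ x (J y) u u) (u x y z : V) :
    fderiv ℝ (fun v => Ω v y z) u x - fderiv ℝ (fun v => Ω v x z) u y
        + fderiv ℝ (fun v => Ω v x y) u z
      = 2 * (Θ x (J y) z u + Θ y (J z) x u + Θ z (J x) y u) := by
  have hanti : Θ x (J z) = -Θ z (J x) :=
    LinearMap.apply_map_eq_neg_apply_map (M := V →ₗ[ℝ] V →ₗ[ℝ] ℝ) hJ2 Θ
      (fun a b => LinearMap.ext fun c => LinearMap.ext fun d => hs1 a b c d)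
      (fun a b => LinearMap.ext fun c => LinearMap.ext fun d => hsJ a b c d) x z
  simp only [fderiv_kaehlerForm hs2 hΩ, hanti, LinearMap.neg_apply]
  ring

end KaehlerForm

theorem dOmega_eq_two_K_J_general
    {V : Type*} [NormedAddCommGroup V] [InnerProductSpace ℝ V] [FiniteDimensional ℝ V]
    (J : V →ₗ[ℝ] V)
    (hJ2 : ∀ x : V, J (J x) = -x)
    (Θ : V →ₗ[ℝ] V →ₗ[ℝ] V →ₗ[ℝ] V →ₗ[ℝ] ℝ)
    (hs1 : ∀ x y z w : V, Θ x y z w = Θ y x z w)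
    (hs2 : ∀ x y z w : V, Θ x y z w = Θ x y w z)
    (hsJ : ∀ x y z w : V, Θ (J x) (J y) z w = Θ x y z w)
    (Ω : V → V → V → ℝ)
    (hΩ : ∀ u x y : V, Ω u x y = ⟪x, J y⟫ + Θ x (J y) u u) :
    (∀ u x y z : V,
      fderiv ℝ (fun v => Ω v y z) u x - fderiv ℝ (fun v => Ω v x z) u y
        + fderiv ℝ (fun v => Ω v x y) u z
      = 2 * (Θ x (J y) z u + Θ y (J z) x u + Θ z (J x) y u)) ∧
    ((∀ u x y z : V,
        fderiv ℝ (fun v => Ω v y z) u x - fderiv ℝ (fun v => Ω v x z) u y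
          + fderiv ℝ (fun v => Ω v x y) u z = 0)
      ↔ (∀ x y z w : V, Θ x (J y) z w + Θ y (J z) x w + Θ z (J x) y w = 0)) := by
  have hdΩ := kaehlerForm_extDeriv_eq hJ2 hs1 hs2 hsJ hΩ
  refine ⟨hdΩ, ⟨fun h x y z w => ?_, fun h u x y z => ?_⟩⟩
  · have := h w x y z
    rw [hdΩ] at this
    linarith
  · rw [hdΩ, h]
    ring

/-- For `Θ ∈ S²₊(V*)⊗S²(V*)` and the metric `g_Θ(u)(x,y) = ⟨x,y⟩ + Θ(x,y,u,u)` with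
Kaehler form `Ω(u)(x,y) = g_Θ(u)(x,Jy)`, the exterior derivative of `Ω` in the constant
frame satisfies `dΩ(u)(x,y,z) = 2(K_JΘ)(x,y,z;u)`; in particular `dΩ ≡ 0` iff
`K_JΘ = 0`. -/
theorem dOmega_eq_two_K_J
    {V : Type*} [NormedAddCommGroup V] [InnerProductSpace ℝ V] [FiniteDimensional ℝ V]
    {n : ℕ} (hdim : Module.finrank ℝ V = 2 * n) (hm : 4 ≤ Module.finrank ℝ V)
    (J : V →ₗ[ℝ] V)
    (hJ2 : ∀ x : V, J (J x) = -x)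
    (hJi : ∀ x y : V, ⟪J x, J y⟫ = ⟪x, y⟫)
    (Θ : V →ₗ[ℝ] V →ₗ[ℝ] V →ₗ[ℝ] V →ₗ[ℝ] ℝ)
    (hs1 : ∀ x y z w : V, Θ x y z w = Θ y x z w)
    (hs2 : ∀ x y z w : V, Θ x y z w = Θ x y w z)
    (hsJ : ∀ x y z w : V, Θ (J x) (J y) z w = Θ x y z w)
    (Ω : V → V → V → ℝ)
    (hΩ : ∀ u x y : V, Ω u x y = ⟪x, J y⟫ + Θ x (J y) u u) :
    (∀ u x y z : V,
      fderiv ℝ (fun v => Ω v y z) u x - fderiv ℝ (fun v => Ω v x z) u y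
        + fderiv ℝ (fun v => Ω v x y) u z
      = 2 * (Θ x (J y) z u + Θ y (J z) x u + Θ z (J x) y u)) ∧
    ((∀ u x y z : V,
        fderiv ℝ (fun v => Ω v y z) u x - fderiv ℝ (fun v => Ω v x z) u y
          + fderiv ℝ (fun v => Ω v x y) u z = 0)
      ↔ (∀ x y z w : V, Θ x (J y) z w + Θ y (J z) x w + Θ z (J x) y w = 0)) :=
  dOmega_eq_two_K_J_general J hJ2 Θ hs1 hs2 hsJ Ω hΩ
end
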